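/- arXiv:1812.00316 — 3 statements merged into one kernel-verified Lean document; each statement's English description precedes it below -/
import Mathlib

section
/- The coefficients a_n of exp(z/(1-z)) are positive rationals and n!·a_n is a positive integer for all n ≥ 0. -/
/-!
Summing `exp y = ∑ yᵏ / k!` with `y = x / (1 - x)` and `(1 - x)⁻ᵏ = ∑ C(k + m - 1, m) xᵐ`
gives an absolutely convergent double series `∑_{k,m} C(k + m - 1, m) x^(k+m) / k!`. Grouping it by
`n = k + m` shows `n! aₙ = ∑_{k+m=n} C(n - 1, m) · n!/k!`, a sum of natural numbers whose
`m = 0` term is `1`; uniqueness of power series coefficients identifies the given `a` with it.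
-/

open Finset Nat

section PowerSeriesUniqueness

open FormalMultilinearSeries

theorem hasFPowerSeriesOnBall_ofScalars_of_hasSum {c : ℕ → ℝ} {f : ℝ → ℝ} {r : NNReal}
    (hr : 0 < r) (hf : ∀ x : ℝ, |x| < r → HasSum (fun n => c n * x ^ n) (f x)) :
    HasFPowerSeriesOnBall f (ofScalars ℝ c) 0 r where
  r_le := by
    refine ENNReal.le_of_forall_pos_nnreal_lt fun s _ hs => ?_
    have hs' : |(s : ℝ)| < r := by
      rw [NNReal.abs_eq]; exact_mod_cast hs
    refine le_radius_of_tendsto _ (l := 0) ?_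
    simpa [ofScalars_norm, abs_mul] using (hf s hs').summable.tendsto_atTop_zero.abs
  r_pos := by simpa using hr
  hasSum := by
    intro y hy
    rw [Metric.eball_coe, mem_ball_zero_iff, Real.norm_eq_abs] at hy
    simpa [ofScalars_apply_eq, mul_comm] using hf y hy

theorem coeff_eq_of_hasSum_pow {a b : ℕ → ℝ} {f : ℝ → ℝ} {r : NNReal} (hr : 0 < r)
    (ha : ∀ x : ℝ, |x| < r → HasSum (fun n => a n * x ^ n) (f x))
    (hb : ∀ x : ℝ, |x| < r → HasSum (fun n => b n * x ^ n) (f x)) : a = b :=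
  ofScalars_series_injective ℝ ℝ <|
    (hasFPowerSeriesOnBall_ofScalars_of_hasSum hr ha).hasFPowerSeriesAt.eq_formalMultilinearSeries
      (hasFPowerSeriesOnBall_ofScalars_of_hasSum hr hb).hasFPowerSeriesAt

end PowerSeriesUniqueness

theorem HasSum.sum_antidiagonal {α A : Type*} [AddCommMonoid α] [TopologicalSpace α]
    [ContinuousAdd α] [RegularSpace α] [AddMonoid A] [HasAntidiagonal A] {f : A × A → α} {a : α}
    (h : HasSum f a) : HasSum (fun n => ∑ p ∈ antidiagonal n, f p) a :=
  (HasAntidiagonal.sigmaAntidiagonalEquivProd.hasSum_iff.2 h).sigma fun n =>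
    (antidiagonal n).hasSum fun p => f p

-- `(k + m - 1).choose m` is the coefficient of `x ^ m` in `(1 - x) ^ (-k)` also for `k = 0`,
-- where the truncated subtraction makes it `(m - 1).choose m = if m = 0 then 1 else 0`.
theorem hasSum_choose_add_sub_one_mul_geometric {𝕜 : Type*} [NormedDivisionRing 𝕜] (k : ℕ)
    {x : 𝕜} (hx : ‖x‖ < 1) :
    HasSum (fun m => ((k + m - 1).choose m : 𝕜) * x ^ m) ((1 - x) ^ k)⁻¹ := by
  cases k with
  | zero =>
    convert hasSum_ite_eq (0 : ℕ) (1 : 𝕜) using 2 with m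
    · rcases m with _ | m <;> simp
    · simp
  | succ j =>
    convert hasSum_choose_mul_geometric_of_norm_lt_one j hx using 2 with m
    · rw [Nat.add_right_comm, Nat.add_sub_cancel, Nat.add_comm j m, Nat.choose_symm_add]
    · rw [one_div]

theorem Real.hasSum_pow_div_factorial (y : ℝ) : HasSum (fun k => y ^ k / k !) (Real.exp y) :=
  Real.exp_eq_exp_ℝ ▸ NormedSpace.expSeries_div_hasSum_exp y

noncomputable def expDivOneSubTerm (x : ℝ) (p : ℕ × ℕ) : ℝ :=
  x ^ p.1 / p.1 ! * ((p.1 + p.2 - 1).choose p.2 * x ^ p.2)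

theorem hasSum_expDivOneSubTerm_fiber {x : ℝ} (hx : |x| < 1) (k : ℕ) :
    HasSum (fun m => expDivOneSubTerm x (k, m)) ((x / (1 - x)) ^ k / k !) := by
  rw [show (x / (1 - x)) ^ k / k ! = x ^ k / k ! * ((1 - x) ^ k)⁻¹ by rw [div_pow]; ring]
  exact (hasSum_choose_add_sub_one_mul_geometric (𝕜 := ℝ) k
    (by rwa [Real.norm_eq_abs])).mul_left _

theorem abs_expDivOneSubTerm (x : ℝ) (p : ℕ × ℕ) :
    |expDivOneSubTerm x p| = expDivOneSubTerm |x| p := by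
  simp [expDivOneSubTerm, abs_mul, abs_div, abs_pow]

theorem summable_expDivOneSubTerm {x : ℝ} (hx : |x| < 1) : Summable (expDivOneSubTerm x) := by
  have hx' : |(|x|)| < 1 := by rwa [abs_abs]
  have hnonneg : 0 ≤ expDivOneSubTerm |x| := fun p => by
    rw [← abs_expDivOneSubTerm]; exact abs_nonneg _
  refine Summable.of_abs ?_
  simp only [abs_expDivOneSubTerm]
  refine (summable_prod_of_nonneg hnonneg).2
    ⟨fun k => (hasSum_expDivOneSubTerm_fiber hx' k).summable, ?_⟩
  simpa only [(hasSum_expDivOneSubTerm_fiber hx' _).tsum_eq] using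
    (Real.hasSum_pow_div_factorial _).summable

theorem hasSum_expDivOneSubTerm {x : ℝ} (hx : |x| < 1) :
    HasSum (expDivOneSubTerm x) (Real.exp (x / (1 - x))) := by
  have h := (summable_expDivOneSubTerm hx).hasSum
  rwa [(h.prod_fiberwise (hasSum_expDivOneSubTerm_fiber hx)).unique
    (Real.hasSum_pow_div_factorial _)] at h

-- The summand indexed by `(k, m)` is the Lah number `L(n, k) = C(n - 1, k - 1) n! / k!`.
def lahSum (n : ℕ) : ℕ :=
  ∑ p ∈ antidiagonal n, (n - 1).choose p.2 * n.descFactorial p.2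

theorem lahSum_pos (n : ℕ) : 0 < lahSum n :=
  Finset.sum_pos' (fun _ _ => Nat.zero_le _) ⟨(n, 0), by simp, by simp⟩

theorem sum_antidiagonal_expDivOneSubTerm (x : ℝ) (n : ℕ) :
    ∑ p ∈ antidiagonal n, expDivOneSubTerm x p = lahSum n / n ! * x ^ n := by
  rw [lahSum, Nat.cast_sum, Finset.sum_div, Finset.sum_mul]
  refine Finset.sum_congr rfl fun ⟨k, m⟩ hp => ?_
  obtain rfl : k + m = n := mem_antidiagonal.1 hp
  have hfac : (k ! : ℝ) * (k + m).descFactorial m = (k + m) ! := by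
    exact_mod_cast Nat.add_sub_cancel k m ▸ Nat.factorial_mul_descFactorial (Nat.le_add_left m k)
  rw [expDivOneSubTerm, ← hfac, pow_add]
  field_simp
  push_cast
  ring

theorem hasSum_lahSum_div_factorial_mul_pow {x : ℝ} (hx : |x| < 1) :
    HasSum (fun n => (lahSum n / n ! : ℝ) * x ^ n) (Real.exp (x / (1 - x))) := by
  simpa only [sum_antidiagonal_expDivOneSubTerm] using
    (hasSum_expDivOneSubTerm hx).sum_antidiagonal

/-- The Maclaurin coefficients `a n` of `exp(z/(1-z))` are positive rationals,
and `n!·aₙ` is a positive integer, for all `n ≥ 0`. -/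
theorem stmt_3 (a : ℕ → ℝ)
    (ha : ∀ x : ℝ, |x| < 1 → HasSum (fun n => a n * x ^ n) (Real.exp (x / (1 - x)))) :
    ∀ n : ℕ, (∃ q : ℚ, 0 < q ∧ a n = (q : ℝ)) ∧
      ∃ m : ℕ, 0 < m ∧ (n.factorial : ℝ) * a n = (m : ℝ) := by
  have hcoef : a = fun n => (lahSum n / n ! : ℝ) :=
    coeff_eq_of_hasSum_pow one_pos (by simpa using ha) fun x hx =>
      hasSum_lahSum_div_factorial_mul_pow (by simpa using hx)
  intro n
  have hpos := lahSum_pos n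
  refine ⟨⟨lahSum n / n !, by positivity, by simp [hcoef]⟩, lahSum n, hpos, ?_⟩
  rw [hcoef]
  field_simp
end

section
/- The function f_1(z) = exp(1/(1-z)) E_1(1/(1-z)) satisfies the differential equation (1-z)^2 f_1'(z) - f_1(z) = z - 1 on the open unit disk. -/
/-- The exponential integral `E₁(x) = ∫_x^∞ e^{-t}/t dt`. -/
noncomputable def E1 (x : ℝ) : ℝ := ∫ t in Set.Ioi x, Real.exp (-t) / t

/-!
Since `E₁' x = -e^{-x}/x`, the product rule gives `(eˣ E₁ x)' = eˣ E₁ x - 1/x`. Composing with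
`g z = 1/(1-z)`, whose derivative is `g z ^ 2 = 1/(1-z)^2`, the factor `(1-z)^2` cancels and
`(1-z)^2 f₁' z = f₁ z - (1-z)`.
-/

open Set MeasureTheory Real Filter Topology

theorem hasDerivAt_setIntegral_Ioi {E : Type*} [NormedAddCommGroup E] [NormedSpace ℝ E]
    [CompleteSpace E] {f : ℝ → E} {a x : ℝ} (hf : IntegrableOn f (Ioi a)) (hax : a < x)
    (hfx : ContinuousAt f x) :
    HasDerivAt (fun y => ∫ t in Ioi y, f t) (-f x) x := by
  have hmeas : StronglyMeasurableAtFilter f (𝓝 x) :=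
    ⟨Ioi a, Ioi_mem_nhds hax, hf.aestronglyMeasurable⟩
  have hint : IntervalIntegrable f volume a x :=
    (intervalIntegrable_iff_integrableOn_Ioc_of_le hax.le).2 (hf.mono_set Ioc_subset_Ioi_self)
  have hderiv := (intervalIntegral.integral_hasDerivAt_right hint hmeas hfx).const_sub
    (∫ t in Ioi a, f t)
  refine hderiv.congr_of_eventuallyEq ?_
  filter_upwards [Ioi_mem_nhds hax] with y hy
  rw [← intervalIntegral.integral_Ioi_sub_Ioi hf hy.le, sub_sub_cancel]

theorem integrableOn_exp_neg_div_Ioi {a : ℝ} (ha : 0 < a) :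
    IntegrableOn (fun t => exp (-t) / t) (Ioi a) := by
  refine ((exp_neg_integrableOn_Ioi a one_pos).div_const a).mono' ?_ ?_
  · exact ((measurable_exp.comp measurable_neg).div measurable_id).aestronglyMeasurable
  · filter_upwards [ae_restrict_mem measurableSet_Ioi] with t (ht : a < t)
    rw [norm_div, norm_of_nonneg (exp_pos _).le, norm_of_nonneg (ha.trans ht).le, neg_one_mul]
    exact div_le_div_of_nonneg_left (exp_pos _).le ha ht.le

theorem hasDerivAt_E1 {x : ℝ} (hx : 0 < x) : HasDerivAt E1 (-(exp (-x) / x)) x :=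
  hasDerivAt_setIntegral_Ioi (integrableOn_exp_neg_div_Ioi (half_pos hx)) (half_lt_self hx)
    (((continuous_exp.comp continuous_neg).continuousAt).div continuousAt_id hx.ne')

theorem hasDerivAt_exp_mul_E1 {x : ℝ} (hx : 0 < x) :
    HasDerivAt (fun y => exp y * E1 y) (exp x * E1 x - 1 / x) x := by
  refine ((hasDerivAt_exp x).mul (hasDerivAt_E1 hx)).congr_deriv ?_
  rw [mul_neg, ← mul_div_assoc, ← exp_add, add_neg_cancel, exp_zero, sub_eq_add_neg]

theorem hasDerivAt_one_div_one_sub {𝕜 : Type*} [NontriviallyNormedField 𝕜] {z : 𝕜}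
    (hz : z ≠ 1) : HasDerivAt (fun x : 𝕜 => 1 / (1 - x)) ((1 / (1 - z)) ^ 2) z := by
  simp only [one_div, inv_pow]
  refine (((hasDerivAt_id z).const_sub 1).fun_inv (sub_ne_zero.2 hz.symm)).congr_deriv ?_
  rw [id, neg_neg, one_div]

/-- `f₁(z) = exp(1/(1-z)) E₁(1/(1-z))` satisfies `(1-z)² f₁'(z) - f₁(z) = z - 1`
on the open unit disk. -/
theorem stmt_8 :
    ∀ z : ℝ, |z| < 1 →
      (1 - z) ^ 2 * deriv (fun x => Real.exp (1 / (1 - x)) * E1 (1 / (1 - x))) z -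
        Real.exp (1 / (1 - z)) * E1 (1 / (1 - z)) = z - 1 := by
  intro z hz
  have h1z : 0 < 1 - z := sub_pos.2 (lt_of_abs_lt hz)
  have hg : 0 < 1 / (1 - z) := one_div_pos.2 h1z
  have hf : HasDerivAt (fun x => exp (1 / (1 - x)) * E1 (1 / (1 - x))) _ z :=
    (hasDerivAt_exp_mul_E1 hg).comp (h₂ := fun y => exp y * E1 y) z
      (hasDerivAt_one_div_one_sub (sub_pos.1 h1z).ne)
  rw [hf.deriv]
  field_simp
  ring
end

section
/- With β_{j,k} as defined (β_{j,k} = 8^{2k-2j-1} α_{j,k}, where α_{j,k} is the four-term expression in Pochhammer symbols with m = k-j ≥ 1 and τ = j+1/2), every β_{j,k} for 0 ≤ j < k is an even integer. -/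
/-- `α_{j,k}` from Corollary `explicit_dn2`: with `m = k - j` and `τ = j + 1/2`,
`α_{j,k} = (-1 + 3·2^{m-1} - 2·3^m)(τ)_{m-1}/(m-1)! + (7 - 17·2^m + 17·3^m)(τ)_m/m!
 + (-13 + 38·2^m - 33·3^m)(τ)_{m+1}/(m+1)! + 6(1 - 4·2^m + 3·3^m)(τ)_{m+2}/(m+2)!`. -/
noncomputable def alphaJK (j k : ℕ) : ℚ :=
  let m : ℕ := k - j
  let τ : ℚ := (j : ℚ) + 1 / 2
  (-1 + 3 * 2 ^ (m - 1) - 2 * 3 ^ m) * (ascPochhammer ℚ (m - 1)).eval τ / ((m - 1).factorial : ℚ)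
  + (7 - 17 * 2 ^ m + 17 * 3 ^ m) * (ascPochhammer ℚ m).eval τ / (m.factorial : ℚ)
  + (-13 + 38 * 2 ^ m - 33 * 3 ^ m) * (ascPochhammer ℚ (m + 1)).eval τ / ((m + 1).factorial : ℚ)
  + 6 * (1 - 4 * 2 ^ m + 3 * 3 ^ m) * (ascPochhammer ℚ (m + 2)).eval τ / ((m + 2).factorial : ℚ)

/-- `β_{j,k} = 8^{2k-2j-1} α_{j,k}`. -/
noncomputable def betaJK (j k : ℕ) : ℚ := 8 ^ (2 * k - 2 * j - 1) * alphaJK j k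

/-! With `τ = j + 1/2`, the normalised Pochhammer values `4^ℓ (τ)_ℓ / ℓ!` are integers: for
`j = 0` they are the central binomial coefficients, and shifting `τ` by one obeys the Pascal-type
rule `(x+1)_{ℓ+1}/(ℓ+1)! = (x)_{ℓ+1}/(ℓ+1)! + (x+1)_ℓ/ℓ!`. Hence `β_{j,k}` is an integer combination
of these values with coefficients `2^{6m-3-2ℓ}` (`ℓ ∈ {m-1, …, m+2}`), all even once `m ≥ 2`
(the last coefficient carries an extra factor `6`). For `m = 1`, `β_{j,j+1}` is an explicit cubic
in `j`. -/

theorem ascPochhammer_succ_eval_add_one {R : Type*} [CommSemiring R] (n : ℕ) (x : R) :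
    (ascPochhammer R (n + 1)).eval (x + 1) =
      (ascPochhammer R (n + 1)).eval x + (n + 1) * (ascPochhammer R n).eval (x + 1) := by
  simpa [Polynomial.eval_comp, nsmul_eq_mul] using
    congrArg (Polynomial.eval x) (ascPochhammer_succ_comp_X_add_one (S := R) n)

theorem four_pow_mul_ascPochhammer_half_eval (l : ℕ) :
    (4 : ℚ) ^ l * (ascPochhammer ℚ l).eval (1 / 2) = l.centralBinom * l.factorial := by
  induction l with
  | zero => simp
  | succ l ih =>
    have h := Nat.succ_mul_centralBinom_succ l
    rw [ascPochhammer_succ_eval, Nat.factorial_succ]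
    qify at h
    push_cast
    linear_combination (2 * l + 1 : ℚ) * 2 * ih - l.factorial * h

theorem exists_int_four_pow_mul_ascPochhammer_eval_add_half (j l : ℕ) :
    ∃ c : ℤ, (4 : ℚ) ^ l * (ascPochhammer ℚ l).eval ((j : ℚ) + 1 / 2) = c * l.factorial := by
  induction j generalizing l with
  | zero => exact ⟨l.centralBinom, by simpa using four_pow_mul_ascPochhammer_half_eval l⟩
  | succ j ihj =>
    induction l with
    | zero => exact ⟨1, by simp⟩
    | succ l ihl =>
      obtain ⟨a, ha⟩ := ihj (l + 1)
      obtain ⟨b, hb⟩ := ihl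
      refine ⟨a + 4 * b, ?_⟩
      have hx : ((j + 1 : ℕ) : ℚ) + 1 / 2 = ((j : ℚ) + 1 / 2) + 1 := by push_cast; ring
      rw [hx] at hb ⊢
      rw [ascPochhammer_succ_eval_add_one]
      push_cast [Nat.factorial_succ] at ha ⊢
      linear_combination ha + 4 * (l + 1 : ℚ) * hb

theorem exists_int_ascPochhammer_eval_add_half_div_factorial (j l : ℕ) :
    ∃ c : ℤ, (ascPochhammer ℚ l).eval ((j : ℚ) + 1 / 2) / l.factorial = c / 4 ^ l := by
  obtain ⟨c, hc⟩ := exists_int_four_pow_mul_ascPochhammer_eval_add_half j l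
  refine ⟨c, ?_⟩
  rw [div_eq_div_iff (by positivity) (by positivity)]
  linear_combination hc

theorem betaJK_self_add_one (j : ℕ) :
    betaJK j (j + 1) = 2 * (8 * j ^ 3 - 36 * j ^ 2 - 2 * j - 7 : ℤ) := by
  simp only [betaJK, alphaJK, show j + 1 - j = 1 by omega, show 2 * (j + 1) - 2 * j - 1 = 1 by omega,
    Nat.sub_self, ascPochhammer_succ_eval, ascPochhammer_zero, Polynomial.eval_one, Nat.factorial]
  push_cast
  ring

theorem exists_betaJK_self_add_add_two (j s : ℕ) :
    ∃ m : ℤ, betaJK j (j + s + 2) = 2 * m := by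
  obtain ⟨c₁, h₁⟩ := exists_int_ascPochhammer_eval_add_half_div_factorial j (s + 1)
  obtain ⟨c₂, h₂⟩ := exists_int_ascPochhammer_eval_add_half_div_factorial j (s + 2)
  obtain ⟨c₃, h₃⟩ := exists_int_ascPochhammer_eval_add_half_div_factorial j (s + 3)
  obtain ⟨c₄, h₄⟩ := exists_int_ascPochhammer_eval_add_half_div_factorial j (s + 4)
  refine ⟨2 ^ (4 * s) * (64 * (-1 + 3 * 2 ^ (s + 1) - 2 * 3 ^ (s + 2)) * c₁
    + 16 * (7 - 17 * 2 ^ (s + 2) + 17 * 3 ^ (s + 2)) * c₂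
    + 4 * (-13 + 38 * 2 ^ (s + 2) - 33 * 3 ^ (s + 2)) * c₃
    + 6 * (1 - 4 * 2 ^ (s + 2) + 3 * 3 ^ (s + 2)) * c₄), ?_⟩
  simp only [betaJK, alphaJK, show j + s + 2 - j = s + 2 by omega,
    show 2 * (j + s + 2) - 2 * j - 1 = 2 * s + 3 by omega, show s + 2 - 1 = s + 1 by omega,
    mul_div_assoc, h₁, h₂, h₃, h₄]
  push_cast
  rw [show (8 : ℚ) = 2 ^ 3 by norm_num, show (4 : ℚ) = 2 ^ 2 by norm_num]
  simp only [← pow_mul]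
  field_simp
  ring

/-- Every `β_{j,k}` with `0 ≤ j < k` is an even integer. -/
theorem stmt_19 : ∀ j k : ℕ, j < k → ∃ m : ℤ, betaJK j k = 2 * (m : ℚ) := by
  intro j k hjk
  obtain ⟨n, rfl⟩ : ∃ n, k = j + n + 1 := ⟨k - j - 1, by omega⟩
  cases n with
  | zero => exact ⟨_, betaJK_self_add_one j⟩
  | succ s => exact exists_betaJK_self_add_add_two j s
end
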